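/- arXiv:0804.4616 — 3 statements merged into one kernel-verified Lean document; each statement's English description precedes it below -/
import Mathlib

section
/- Fix an integer i ≥ 0 and set g := 2i + 6. Then binomial(g-2, i) · (−i(2g−2)/(g−2) + 3(g−1)) = (i+1) · binomial(g, i+2). Moreover, for integers g, i ≥ 0 with g ≥ i + 4, the equality binomial(g-2,i)·(−i(2g−2)/(g−2) + 3(g−1)) = (i+1)·binomial(g, i+2) holds if and only if g = 2i + 6. -/
/-- For `g = 2i + 6`, `C(g-2, i)·(−i(2g−2)/(g−2) + 3(g−1)) = (i+1)·C(g, i+2)`;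
moreover for `g ≥ i + 4` this equality holds if and only if `g = 2i + 6`. -/
theorem koszul_rank_equality :
    (∀ i : ℕ,
      (((2 * i + 6 - 2).choose i : ℚ)) *
          (-((i : ℚ) * (2 * (2 * (i : ℚ) + 6) - 2)) / ((2 * (i : ℚ) + 6) - 2)
            + 3 * ((2 * (i : ℚ) + 6) - 1))
        = ((i : ℚ) + 1) * ((2 * i + 6).choose (i + 2) : ℚ)) ∧
    (∀ g i : ℕ, i + 4 ≤ g →
      ((((g - 2).choose i : ℚ)) *
          (-((i : ℚ) * (2 * (g : ℚ) - 2)) / ((g : ℚ) - 2) + 3 * ((g : ℚ) - 1))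
        = ((i : ℚ) + 1) * (g.choose (i + 2) : ℚ) ↔ g = 2 * i + 6)) := by
  have main : ∀ g i : ℕ, i + 4 ≤ g →
      ((((g - 2).choose i : ℚ)) *
          (-((i : ℚ) * (2 * (g : ℚ) - 2)) / ((g : ℚ) - 2) + 3 * ((g : ℚ) - 1))
        = ((i : ℚ) + 1) * (g.choose (i + 2) : ℚ) ↔ g = 2 * i + 6) := by
    intro g i hg
    obtain ⟨m, rfl⟩ : ∃ m, g = i + 4 + m := ⟨g - (i+4), by omega⟩
    have hsub : i + 4 + m - 2 = i + 2 + m := by omega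
    rw [hsub]
    push_cast
    have hd : ((i:ℚ) + 4 + (m:ℚ) - 2) ≠ 0 := by
      have hi : (0:ℚ) ≤ (i:ℚ) := Nat.cast_nonneg i
      have hm : (0:ℚ) ≤ (m:ℚ) := Nat.cast_nonneg m
      intro hc; linarith
    have hC : (0:ℚ) < ((i+2+m).choose i : ℚ) := by
      exact_mod_cast Nat.choose_pos (by omega : i ≤ i + 2 + m)
    -- key choose identity
    have h1 : (i+4+m) * ((i+3+m).choose (i+1)) = (i+4+m).choose (i+2) * (i+2) := by
      have h := Nat.add_one_mul_choose_eq (i+3+m) (i+1)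
      have e1 : i+3+m+1 = i+4+m := by omega
      have e2 : i+1+1 = i+2 := by omega
      rw [e1, e2] at h
      exact h
    have h2 : (i+3+m) * ((i+2+m).choose i) = (i+3+m).choose (i+1) * (i+1) := by
      have h := Nat.add_one_mul_choose_eq (i+2+m) i
      have e1 : i+2+m+1 = i+3+m := by omega
      rw [e1] at h
      exact h
    have h1q : ((i:ℚ)+4+(m:ℚ)) * ((i+3+m).choose (i+1) : ℚ)
        = ((i+4+m).choose (i+2) : ℚ) * ((i:ℚ)+2) := by exact_mod_cast h1
    have h2q : ((i:ℚ)+3+(m:ℚ)) * ((i+2+m).choose i : ℚ)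
        = ((i+3+m).choose (i+1) : ℚ) * ((i:ℚ)+1) := by exact_mod_cast h2
    have haux : ((i:ℚ)+2) * ((i:ℚ)+1) * ((i+4+m).choose (i+2) : ℚ)
        = ((i:ℚ)+4+(m:ℚ)) * ((i:ℚ)+3+(m:ℚ)) * ((i+2+m).choose i : ℚ) := by
      linear_combination (-((i:ℚ)+1)) * h1q + (-((i:ℚ)+4+(m:ℚ))) * h2q
    rw [div_add' _ _ _ hd, ← mul_div_assoc, div_eq_iff hd]
    constructor
    · intro h
      have key : ((i+2+m).choose i : ℚ) * (((i:ℚ)+1) * ((i:ℚ)+(m:ℚ)+3) *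
          (((m:ℚ)+2) * ((m:ℚ)-(i:ℚ)-2))) = 0 := by
        linear_combination (-(((i:ℚ)+2)*((i:ℚ)+1))) * h
          + (-(((i:ℚ)+1)*((i:ℚ)+4+(m:ℚ)-2))) * haux
      have h2 : ((m:ℚ)-(i:ℚ)-2) = 0 := by
        rcases mul_eq_zero.mp key with h | h
        · exact absurd h hC.ne'
        · rcases mul_eq_zero.mp h with h | h
          · exact absurd h (by positivity)
          · rcases mul_eq_zero.mp h with h | h
            · exact absurd h (by positivity)
            · exact h
      have : (m:ℚ) = (i:ℚ) + 2 := by linarith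
      have : m = i + 2 := by exact_mod_cast this
      omega
    · intro h
      have hm : m = i + 2 := by omega
      subst hm
      push_cast at haux ⊢
      linear_combination (-2:ℚ) * haux
  exact ⟨fun i => by
    have h := (main (2*i+6) i (by omega)).mpr rfl
    push_cast at h ⊢
    convert h using 2, main⟩
end

section
/- For all integers g ≥ 2, the quantity (2^{2g}−1)(g+1)·13 − 2·((2^{2g-1}−2)(6g+18) + (6g+18)) − 3·(2^{2g-2}(6g+18)) is negative if and only if g ≤ 7. -/
/-!
With `N = 2^{2g-2}` the expression collapses to `2^{2g-1}(5g - 37) + 23 - g`. For `g ≥ 8` the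
factor `5g - 37` is positive and `2^{2g-1} > g`, so the value is positive; the finitely many
genera `2 ≤ g ≤ 7` are checked directly.
-/

lemma pencil_canonical_eq (g : ℕ) (hg : 1 ≤ g) :
    ((2 ^ (2 * g) : ℤ) - 1) * ((g : ℤ) + 1) * 13
      - 2 * (((2 ^ (2 * g - 1) : ℤ) - 2) * (6 * (g : ℤ) + 18) + (6 * (g : ℤ) + 18))
      - 3 * ((2 ^ (2 * g - 2) : ℤ) * (6 * (g : ℤ) + 18))
      = 2 ^ (2 * g - 1) * (5 * (g : ℤ) - 37) + 23 - g := by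
  obtain ⟨k, rfl⟩ := Nat.exists_eq_add_of_le' hg
  rw [show 2 * (k + 1) = 2 * k + 2 by omega, show 2 * k + 2 - 1 = 2 * k + 1 by omega,
    show 2 * k + 2 - 2 = 2 * k by omega]
  push_cast
  ring

lemma two_pow_mul_five_mul_sub_add_neg_iff (g : ℕ) :
    (2 : ℤ) ^ (2 * g - 1) * (5 * (g : ℤ) - 37) + 23 - g < 0 ↔ g ≤ 7 := by
  constructor
  · intro hneg
    by_contra! hg
    have hpow : (g : ℤ) < 2 ^ (2 * g - 1) := by
      exact_mod_cast (Nat.lt_two_pow_self (n := g)).trans_le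
        (Nat.pow_le_pow_right two_pos (by omega))
    have hfactor : (3 : ℤ) ≤ 5 * g - 37 := by omega
    nlinarith
  · intro hg
    interval_cases g <;> norm_num

/-- For integers `g ≥ 2`, the intersection number of the lifted Lefschetz pencil with
the canonical class, `(2^{2g}−1)(g+1)·13 − 2((2^{2g-1}−2)(6g+18) + (6g+18))
− 3·2^{2g-2}(6g+18)`, is negative if and only if `g ≤ 7`. -/
theorem pencil_canonical_negative (g : ℕ) (hg : 2 ≤ g) :
    (((2 ^ (2 * g) : ℤ) - 1) * ((g : ℤ) + 1) * 13
      - 2 * (((2 ^ (2 * g - 1) : ℤ) - 2) * (6 * (g : ℤ) + 18) + (6 * (g : ℤ) + 18))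
      - 3 * ((2 ^ (2 * g - 2) : ℤ) * (6 * (g : ℤ) + 18)) < 0) ↔ g ≤ 7 := by
  rw [pencil_canonical_eq g (by omega)]
  exact two_pow_mul_five_mul_sub_add_neg_iff g
end

section
/- Define s(g,s) := 6 + (8g³s − 32g³ − 19g²s + 66g² + 6gs − 16g + 3s + 6) / ((g−1)(g+1)(g²s − 2gs − 4g² + 7g + 3)). Then for each integer g ≥ 18 there exists a rational s ≥ 11 such that 8·s(g,s)/(12 − s(g,s)) + (6 + 12/(g+1))·(16 − 2·s(g,s))/(12 − s(g,s)) < 13. -/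
/-!
Take `s = 11`. Writing `p` for the slope and `c = 6 + 12/(g+1)`, the condition
`(8p + c(16 - 2p))/(12 - p) < 13` is, for `p < 12`, linear in `p`, and after clearing the
denominator `g + 1` it reduces to `(p - 6)(3g - 5) < 2(g - 7)`. For `p = s(g,11)` this is the
positivity of a quintic in `g`, whose Taylor expansion at `g = 18` has positive coefficients.
-/

/-- The slope of the pullback `φ*(A)` of an ample class of slope `s`. -/
noncomputable def pullbackSlope (g : ℕ) (s : ℚ) : ℚ :=
  6 + (8 * (g : ℚ) ^ 3 * s - 32 * (g : ℚ) ^ 3 - 19 * (g : ℚ) ^ 2 * s + 66 * (g : ℚ) ^ 2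
        + 6 * (g : ℚ) * s - 16 * (g : ℚ) + 3 * s + 6) /
      (((g : ℚ) - 1) * ((g : ℚ) + 1) * ((g : ℚ) ^ 2 * s - 2 * (g : ℚ) * s
        - 4 * (g : ℚ) ^ 2 + 7 * (g : ℚ) + 3))

theorem slope_condition_of_lt {K : Type*} [Field K] [LinearOrder K] [IsStrictOrderedRing K]
    {q p : K} (hq : 5 / 3 < q) (hp : p < 6 + 2 * (q - 7) / (3 * q - 5)) :
    8 * p / (12 - p) + (6 + 12 / (q + 1)) * (16 - 2 * p) / (12 - p) < 13 := by
  have hq1 : 0 < q + 1 := by linarith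
  have hp' : (p - 6) * (3 * q - 5) < 2 * (q - 7) :=
    (lt_div_iff₀ (by linarith)).1 (sub_lt_iff_lt_add'.2 hp)
  have hp12 : p < 12 := by nlinarith
  rw [← add_div, div_lt_iff₀ (by linarith), add_div' _ _ _ hq1.ne', div_mul_eq_mul_div,
    add_div' _ _ _ hq1.ne', div_lt_iff₀ hq1]
  linear_combination 3 * hp'

theorem pullbackSlope_eleven_lt (g : ℕ) (hg : 18 ≤ g) :
    pullbackSlope g 11 < 6 + 2 * ((g : ℚ) - 7) / (3 * g - 5) := by
  have hq : (18 : ℚ) ≤ g := by exact_mod_cast hg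
  set q : ℚ := (g : ℚ)
  have hslope : pullbackSlope g 11 = 6 + (56 * q ^ 3 - 143 * q ^ 2 + 50 * q + 39) /
      ((q - 1) * (q + 1) * (7 * q ^ 2 - 15 * q + 3)) := by
    unfold pullbackSlope
    ring
  have hden : 0 < (q - 1) * (q + 1) * (7 * q ^ 2 - 15 * q + 3) :=
    mul_pos (mul_pos (by linarith) (by linarith)) (by nlinarith)
  have hquintic : 0 < 14 * q ^ 5 - 296 * q ^ 4 + 911 * q ^ 3 - 779 * q ^ 2 - 83 * q + 237 := by
    have ht : 0 ≤ q - 18 := sub_nonneg.2 hq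
    have htaylor : 14 * q ^ 5 - 296 * q ^ 4 + 911 * q ^ 3 - 779 * q ^ 2 - 83 * q + 237
        = 14 * (q - 18) ^ 5 + 964 * (q - 18) ^ 4 + 24959 * (q - 18) ^ 3
          + 289471 * (q - 18) ^ 2 + 1300597 * (q - 18) + 440355 := by
      ring
    rw [htaylor]
    positivity
  rw [hslope, add_lt_add_iff_left, div_lt_div_iff₀ hden (by linarith)]
  linear_combination hquintic

/-- For each integer `g ≥ 18` there is a rational `s ≥ 11` with
`8·s(g,s)/(12 − s(g,s)) + (6 + 12/(g+1))·(16 − 2·s(g,s))/(12 − s(g,s)) < 13`. -/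
theorem even_genus_general_type_condition (g : ℕ) (hg : 18 ≤ g) :
    ∃ s : ℚ, 11 ≤ s ∧
      8 * pullbackSlope g s / (12 - pullbackSlope g s)
        + (6 + 12 / ((g : ℚ) + 1)) * (16 - 2 * pullbackSlope g s) / (12 - pullbackSlope g s)
        < 13 := by
  have hq : (18 : ℚ) ≤ g := by exact_mod_cast hg
  exact ⟨11, le_rfl, slope_condition_of_lt (by linarith) (pullbackSlope_eleven_lt g hg)⟩
end
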